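/- Conversely, in a group G generated by involutions q_1, ..., q_{n−1} such that the elements q_{i,j} := q_{j−1} q_{j−i} q_{j−1} (with q_0 = 1) satisfy the cactus relations (q_{i,j}² = 1; q_{i,j} q_{k,l} q_{i,j} = q_{i+j−l,i+j−k} for i ≤ k < l ≤ j; q_{i,j} q_{k,l} = q_{k,l} q_{i,j} for j < k), the elements t_1 := q_1, t_2 := q_1 q_2 q_1, t_i := q_{i−1} q_i q_{i−1} q_{i−2} (i > 2) satisfy t_i² = 1, t_i t_j = t_j t_i for |i−j| > 1, and (t_i q_{j,k})² = 1 for i+1 < j < k. -/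

import Mathlib

/-- The element `q_{i,j} := q_{j-1} q_{j-i} q_{j-1}`. -/
def qq {G : Type*} [Group G] (q : ℕ → G) (i j : ℕ) : G :=
  q (j - 1) * q (j - i) * q (j - 1)

/-- The elements `t_1 := q_1`, `t_2 := q_1 q_2 q_1`,
`t_i := q_{i-1} q_i q_{i-1} q_{i-2}` for `i > 2`. -/
def tOfq {G : Type*} [Group G] (q : ℕ → G) (i : ℕ) : G :=
  if i = 1 then q 1
  else if i = 2 then q 1 * q 2 * q 1
  else q (i - 1) * q i * q (i - 1) * q (i - 2)

/-!
Two facts drive the argument: `q_{1,j} = q_{j-1}` for an involution `q_{j-1}`, and the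
nesting relation, which says that conjugation by the involution `q_{i,j}` reflects an
interval `[k, l] ⊆ [i, j]` to `[i + j - l, i + j - k]`. For `j ≥ 3` we have
`t_j = q_{1,j} q_{1,j+1} q_{1,j} q_{1,j-1}`, and under these four reflections the interval
`[1, x + 1]` with `x ≤ j - 2` travels to `[j - 1 - x, j - 1]`, `[2, x + 2]`, `[j - x, j]` and
back to `[1, x + 1]`: so `t_j` commutes with `q_x = q_{1,x+1}` for every `x ≤ j - 2`.

Since `t_i` is a word in `q_1, …, q_i`, this gives the commutation of `t_i` and `t_j`; it also
makes `t_i = (q_{i-1} q_i q_{i-1}) q_{i-2}` a product of two commuting involutions. Finally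
`q_x` commutes with `q_{j,k}` for `x + 1 < j` by the disjointness relation, hence so does `t_i`.
-/

section Involutions

variable {G : Type*} [Group G] {a b c : G}

theorem semiconjBy_of_mul_mul_eq (ha : a * a = 1) (h : a * b * a = c) : SemiconjBy a b c := by
  rw [SemiconjBy, ← h, mul_assoc _ a a, ha, mul_one]

theorem mul_mul_mul_self_eq_one (ha : a * a = 1) (hb : b * b = 1) :
    a * b * a * (a * b * a) = 1 := by
  calc a * b * a * (a * b * a) = a * (b * (a * a) * b) * a := by simp only [mul_assoc]
    _ = 1 := by rw [ha, mul_one, hb, mul_one, ha]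

theorem Commute.mul_mul_self_eq_one (h : Commute a b) (ha : a * a = 1) (hb : b * b = 1) :
    a * b * (a * b) = 1 := by
  rw [h.symm.mul_mul_mul_comm, ha, hb, one_mul]

theorem mul_mul_self_eq_one_of_commute_mul (ha : a * a = 1) (hb : b * b = 1)
    (h : Commute (a * b) b) : a * b * (a * b) = 1 := by
  have hab : Commute a b := by
    simpa only [mul_assoc, hb, mul_one] using h.mul_left (Commute.refl b)
  exact hab.mul_mul_self_eq_one ha hb

end Involutions

section Cactus

variable {G : Type*} [Group G] {n : ℕ} {q : ℕ → G}

structure CactusRelations (n : ℕ) (q : ℕ → G) : Prop where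
  mul_self_q : ∀ i, 1 ≤ i → i ≤ n - 1 → q i * q i = 1
  mul_self_qq : ∀ i j, 1 ≤ i → i < j → j ≤ n → qq q i j * qq q i j = 1
  nest : ∀ i j k l, 1 ≤ i → i ≤ k → k < l → l ≤ j → i < j → j ≤ n →
    qq q i j * qq q k l * qq q i j = qq q (i + j - l) (i + j - k)
  disj : ∀ i j k l, 1 ≤ i → i < j → j < k → k < l → l ≤ n →
    qq q i j * qq q k l = qq q k l * qq q i j

theorem qq_one {j : ℕ} (h : q (j - 1) * q (j - 1) = 1) : qq q 1 j = q (j - 1) := by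
  rw [qq, h, one_mul]

theorem qq_one_succ {x : ℕ} (h : q x * q x = 1) : qq q 1 (x + 1) = q x :=
  qq_one h

@[simp]
theorem tOfq_one : tOfq q 1 = q 1 := by
  simp [tOfq]

theorem tOfq_two : tOfq q 2 = q 1 * q 2 * q 1 := by
  simp [tOfq]

theorem tOfq_of_three_le {i : ℕ} (hi : 3 ≤ i) :
    tOfq q i = q (i - 1) * q i * q (i - 1) * q (i - 2) := by
  rw [tOfq, if_neg (by omega), if_neg (by omega)]

theorem commute_tOfq_left {y : G} {i : ℕ} (hi : 1 ≤ i)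
    (h : ∀ x, 1 ≤ x → x ≤ i → Commute (q x) y) : Commute (tOfq q i) y := by
  rcases (by omega : i = 1 ∨ i = 2 ∨ 3 ≤ i) with rfl | rfl | hi3
  · simpa using h 1 le_rfl le_rfl
  · have h₁ := h 1 le_rfl one_le_two
    rw [tOfq_two]
    exact (h₁.mul_left (h 2 one_le_two le_rfl)).mul_left h₁
  · have h₁ := h (i - 1) (by omega) (by omega)
    rw [tOfq_of_three_le hi3]
    exact ((h₁.mul_left (h i hi le_rfl)).mul_left h₁).mul_left (h (i - 2) (by omega) (by omega))

namespace CactusRelations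

theorem semiconjBy_qq (hc : CactusRelations n q) {i j k l k' l' : ℕ} (hi : 1 ≤ i)
    (hik : i ≤ k) (hkl : k < l) (hlj : l ≤ j) (hjn : j ≤ n) (hk' : k' + l = i + j)
    (hl' : k + l' = i + j) : SemiconjBy (qq q i j) (qq q k l) (qq q k' l') := by
  obtain rfl : k' = i + j - l := by omega
  obtain rfl : l' = i + j - k := by omega
  exact semiconjBy_of_mul_mul_eq (hc.mul_self_qq i j hi (by omega) hjn)
    (hc.nest i j k l hi hik hkl hlj (by omega) hjn)

theorem tOfq_eq_qq (hc : CactusRelations n q) {j : ℕ} (hj : 3 ≤ j) (hjn : j + 1 ≤ n) :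
    tOfq q j = qq q 1 j * qq q 1 (j + 1) * qq q 1 j * qq q 1 (j - 1) := by
  have hq : ∀ x, 2 ≤ x → x ≤ j + 1 → qq q 1 x = q (x - 1) := fun x hx hxj =>
    qq_one (hc.mul_self_q (x - 1) (by omega) (by omega))
  rw [tOfq_of_three_le hj, hq j (by omega) (by omega), hq (j + 1) (by omega) le_rfl,
    hq (j - 1) (by omega) (by omega), Nat.add_sub_cancel, Nat.sub_sub]

theorem commute_tOfq_q (hc : CactusRelations n q) {j x : ℕ} (hx : 1 ≤ x) (hxj : x + 2 ≤ j)
    (hjn : j + 1 ≤ n) : Commute (tOfq q j) (q x) := by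
  have h₁ : SemiconjBy (qq q 1 (j - 1)) (qq q 1 (x + 1)) (qq q (j - 1 - x) (j - 1)) := by
    apply hc.semiconjBy_qq <;> omega
  have h₂ : SemiconjBy (qq q 1 j) (qq q (j - 1 - x) (j - 1)) (qq q 2 (x + 2)) := by
    apply hc.semiconjBy_qq <;> omega
  have h₃ : SemiconjBy (qq q 1 (j + 1)) (qq q 2 (x + 2)) (qq q (j - x) j) := by
    apply hc.semiconjBy_qq <;> omega
  have h₄ : SemiconjBy (qq q 1 j) (qq q (j - x) j) (qq q 1 (x + 1)) := by
    apply hc.semiconjBy_qq <;> omega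
  rw [hc.tOfq_eq_qq (by omega) hjn, ← qq_one_succ (hc.mul_self_q x hx (by omega))]
  exact ((h₄.mul_left h₃).mul_left h₂).mul_left h₁

theorem tOfq_mul_self (hc : CactusRelations n q) {i : ℕ} (hi : 1 ≤ i) (hin : i + 1 ≤ n) :
    tOfq q i * tOfq q i = 1 := by
  have hq : ∀ x, 1 ≤ x → x ≤ i → q x * q x = 1 := fun x hx hxi =>
    hc.mul_self_q x hx (by omega)
  rcases (by omega : i = 1 ∨ i = 2 ∨ 3 ≤ i) with rfl | rfl | hi3
  · simpa using hq 1 le_rfl le_rfl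
  · rw [tOfq_two]
    exact mul_mul_mul_self_eq_one (hq 1 le_rfl one_le_two) (hq 2 one_le_two le_rfl)
  · have hcomm := hc.commute_tOfq_q (x := i - 2) (by omega) (by omega) hin
    rw [tOfq_of_three_le hi3] at hcomm ⊢
    exact mul_mul_self_eq_one_of_commute_mul
      (mul_mul_mul_self_eq_one (hq (i - 1) (by omega) (by omega)) (hq i hi le_rfl))
      (hq (i - 2) (by omega) (by omega)) hcomm

theorem commute_tOfq_tOfq (hc : CactusRelations n q) {i j : ℕ} (hi : 1 ≤ i) (hij : i + 1 < j)
    (hjn : j + 1 ≤ n) : Commute (tOfq q i) (tOfq q j) :=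
  commute_tOfq_left hi fun _ hx hxi => (hc.commute_tOfq_q hx (by omega) hjn).symm

theorem commute_tOfq_qq (hc : CactusRelations n q) {i j k : ℕ} (hi : 1 ≤ i) (hij : i + 1 < j)
    (hjk : j < k) (hkn : k ≤ n) : Commute (tOfq q i) (qq q j k) :=
  commute_tOfq_left hi fun x hx hxi => by
    have h := hc.disj 1 (x + 1) j k le_rfl (by omega) (by omega) hjk hkn
    rwa [qq_one_succ (hc.mul_self_q x hx (by omega))] at h

end CactusRelations

end Cactus

theorem cactus_relations_imply_bk_relations_general {G : Type*} [Group G] (n : ℕ) (q : ℕ → G)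
    (hinvq : ∀ i, 1 ≤ i → i ≤ n - 1 → q i * q i = 1)
    (hinv : ∀ i j, 1 ≤ i → i < j → j ≤ n → qq q i j * qq q i j = 1)
    (hnest : ∀ i j k l, 1 ≤ i → i ≤ k → k < l → l ≤ j → i < j → j ≤ n →
      qq q i j * qq q k l * qq q i j = qq q (i + j - l) (i + j - k))
    (hdisj : ∀ i j k l, 1 ≤ i → i < j → j < k → k < l → l ≤ n →
      qq q i j * qq q k l = qq q k l * qq q i j) :
    (∀ i, 1 ≤ i → i ≤ n - 1 → tOfq q i * tOfq q i = 1) ∧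
    (∀ i j, 1 ≤ i → i ≤ n - 1 → 1 ≤ j → j ≤ n - 1 → (i + 1 < j ∨ j + 1 < i) →
      tOfq q i * tOfq q j = tOfq q j * tOfq q i) ∧
    (∀ i j k, 1 ≤ i → i + 1 < j → j < k → k ≤ n →
      (tOfq q i * qq q j k) * (tOfq q i * qq q j k) = 1) := by
  have hc : CactusRelations n q := ⟨hinvq, hinv, hnest, hdisj⟩
  refine ⟨fun i hi hin => hc.tOfq_mul_self hi (by omega), ?_, ?_⟩
  · rintro i j hi hin hj hjn (hij | hji)
    · exact (hc.commute_tOfq_tOfq hi hij (by omega)).eq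
    · exact (hc.commute_tOfq_tOfq hj hji (by omega)).symm.eq
  · intro i j k hi hij hjk hkn
    exact (hc.commute_tOfq_qq hi hij hjk hkn).mul_mul_self_eq_one
      (hc.tOfq_mul_self hi (by omega)) (hc.mul_self_qq j k (by omega) hjk hkn)

/-- Chmutov--Glick--Pylyavskyy, the other direction: in a group generated by
involutions `q_1, …, q_{n-1}` whose associated elements
`q_{i,j} = q_{j-1} q_{j-i} q_{j-1}` (with `q_0 = 1`) satisfy the cactus
relations, the elements `t_1 = q_1`, `t_2 = q_1 q_2 q_1`,
`t_i = q_{i-1} q_i q_{i-1} q_{i-2}` (`i > 2`) satisfy the Bender--Knuth-type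
relations. -/
theorem cactus_relations_imply_bk_relations {G : Type*} [Group G] (n : ℕ) (q : ℕ → G)
    (hq0 : q 0 = 1)
    (hgen : Subgroup.closure {g : G | ∃ i, 1 ≤ i ∧ i ≤ n - 1 ∧ g = q i} = ⊤)
    (hinvq : ∀ i, 1 ≤ i → i ≤ n - 1 → q i * q i = 1)
    (hinv : ∀ i j, 1 ≤ i → i < j → j ≤ n → qq q i j * qq q i j = 1)
    (hnest : ∀ i j k l, 1 ≤ i → i ≤ k → k < l → l ≤ j → i < j → j ≤ n →
      qq q i j * qq q k l * qq q i j = qq q (i + j - l) (i + j - k))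
    (hdisj : ∀ i j k l, 1 ≤ i → i < j → j < k → k < l → l ≤ n →
      qq q i j * qq q k l = qq q k l * qq q i j) :
    (∀ i, 1 ≤ i → i ≤ n - 1 → tOfq q i * tOfq q i = 1) ∧
    (∀ i j, 1 ≤ i → i ≤ n - 1 → 1 ≤ j → j ≤ n - 1 → (i + 1 < j ∨ j + 1 < i) →
      tOfq q i * tOfq q j = tOfq q j * tOfq q i) ∧
    (∀ i j k, 1 ≤ i → i + 1 < j → j < k → k ≤ n →
      (tOfq q i * qq q j k) * (tOfq q i * qq q j k) = 1) :=
  cactus_relations_imply_bk_relations_general n q hinvq hinv hnest hdisj
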